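/- The refinement relation on input space abstractions defined by: S₁ ⊑ S₂ iff (F ⊨ S₁ → F ⊨ S₂ for all F) generated by the reflexivity, refinement, transitivity, and composition rules is sound: whenever S₁ ⊑ S₂ is derivable by the four rules, for every network F, F ⊨ S₁ implies F ⊨ S₂. -/
import Mathlib


/-- `F ⊨ S`: the network satisfies every correctness property in `S`. -/
def SatAbs {X Y : Type*} (F : X → Y) (S : Set (Set X × (Y → Prop))) : Prop :=
  ∀ p ∈ S, ∀ x ∈ p.1, p.2 (F x)

/-- The well-founded input space abstraction refinement relation. -/
inductive Refines {X Y : Type*} :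
    Set (Set X × (Y → Prop)) → Set (Set X × (Y → Prop)) → Prop
  | refl (S : Set (Set X × (Y → Prop))) : Refines S S
  | refine (S : Set (Set X × (Y → Prop))) (Ψin : Set X) (Ψout : Y → Prop)
      (hin : Ψin = ⋃ p ∈ S, p.1)
      (hout : ∀ p ∈ S, ∀ y, p.2 y ↔ Ψout y) :
      Refines S {(Ψin, Ψout)}
  | trans {S₁ S₂ S₃ : Set (Set X × (Y → Prop))} :
      Refines S₁ S₂ → Refines S₂ S₃ → Refines S₁ S₃
  | comp {S₁ S₂ S₃ S₄ : Set (Set X × (Y → Prop))} :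
      Refines S₁ S₃ → Refines S₂ S₄ → Refines (S₁ ∪ S₂) (S₃ ∪ S₄)

/-- Soundness of the refinement relation. -/
theorem refines_sound {X Y : Type*}
    {S₁ S₂ : Set (Set X × (Y → Prop))} (h : Refines S₁ S₂)
    (F : X → Y) (hF : SatAbs F S₁) : SatAbs F S₂ := by
  induction h with
  | refl S => exact hF
  | refine S Ψin Ψout hin hout =>
    rintro p hp x hx
    rw [Set.mem_singleton_iff] at hp
    subst hp
    simp only [hin, Set.mem_iUnion] at hx
    obtain ⟨q, hq, hxq⟩ := hx
    exact (hout q hq (F x)).mp (hF q hq x hxq)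
  | trans h12 h23 ih12 ih23 => exact ih23 (ih12 hF)
  | comp h13 h24 ih13 ih24 =>
    intro p hp
    rcases hp with hp | hp
    · exact ih13 (fun q hq => hF q (Or.inl hq)) p hp
    · exact ih24 (fun q hq => hF q (Or.inr hq)) p hp
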